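/- Let L(w) = ∑_n exp(-⟨w,x_n⟩) with ‖x_n‖_* ≤ B for all n, and consider steepest descent iterates w_{t+1} = w_t + η_t Δw_t where ⟨Δw_t, -∇L(w_t)⟩ = ‖Δw_t‖² = ‖∇L(w_t)‖_*², with step sizes 0 < η_t ≤ 1/(B² L(w_t)) and assuming L(w_t) is strictly decreasing. Then ∑_{t=0}^∞ η_t ‖∇L(w_t)‖_*² < ∞; in particular it is bounded by 2 L(w_0). -/

import Mathlib

open Filter Topology Finset
open scoped RealInnerProductSpace BigOperators

noncomputable section

abbrev Euc (d : ℕ) := EuclideanSpace ℝ (Fin d)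

/-- `N` is a norm on `ℝ^d`. -/
def IsNorm {d : ℕ} (N : Euc d → ℝ) : Prop :=
  (∀ v, N v = 0 ↔ v = 0) ∧ (∀ (c : ℝ) (v), N (c • v) = |c| * N v) ∧
  (∀ v w, N (v + w) ≤ N v + N w)

/-- Dual norm `‖y‖_* = sup_{‖v‖ ≤ 1} ⟨y, v⟩`. -/
def dualNorm {d : ℕ} (N : Euc d → ℝ) (y : Euc d) : ℝ :=
  sSup {s | ∃ v, N v ≤ 1 ∧ s = ⟪y, v⟫}

/-- Exponential-loss empirical objective `L(w) = ∑ n exp(-⟨w, x_n⟩)`. -/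
def expLoss {d N : ℕ} (x : Fin N → Euc d) (u : Euc d) : ℝ :=
  ∑ n, Real.exp (-⟪u, x n⟫)

/-- Negative gradient of the exponential loss: `-∇L(w) = ∑ n exp(-⟨w,x_n⟩) x_n`. -/
def negGrad {d N : ℕ} (x : Fin N → Euc d) (u : Euc d) : Euc d :=
  ∑ n, Real.exp (-⟪u, x n⟫) • x n

/-! Along the segment from `w_t` to `w_{t+1}` the loss `h(s) = L(w_t + s Δw_t)` is convex, so it stays
below `h(0) = L(w_t)` because the loss decreases. Its curvature
`∑ exp(-⟨w_t + s Δw_t, x_n⟩) ⟨Δw_t, x_n⟩²` is at most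
`B² ‖Δw_t‖² h(s) ≤ B² ‖∇L(w_t)‖_*² L(w_t)`, and `h'(0) = -‖∇L(w_t)‖_*²`. A second-order Taylor bound
with the step-size condition gives `η_t ‖∇L(w_t)‖_*² ≤ 2 (L(w_t) - L(w_{t+1}))`, which telescopes. -/

namespace IsNorm

variable {d : ℕ} {Nrm : Euc d → ℝ}

lemma map_zero (h : IsNorm Nrm) : Nrm 0 = 0 := (h.1 0).2 rfl

lemma map_neg (h : IsNorm Nrm) (v : Euc d) : Nrm (-v) = Nrm v := by
  simpa using h.2.1 (-1) v

lemma nonneg (h : IsNorm Nrm) (v : Euc d) : 0 ≤ Nrm v := by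
  have := h.2.2 v (-v)
  rw [add_neg_cancel, h.map_zero, h.map_neg] at this
  linarith

lemma convexOn (h : IsNorm Nrm) : ConvexOn ℝ Set.univ Nrm := by
  refine ⟨convex_univ, fun u _ v _ a b ha hb _ => ?_⟩
  calc Nrm (a • u + b • v) ≤ Nrm (a • u) + Nrm (b • v) := h.2.2 _ _
    _ = a • Nrm u + b • Nrm v := by rw [h.2.1, h.2.1, abs_of_nonneg ha, abs_of_nonneg hb]; rfl

lemma continuous (h : IsNorm Nrm) : Continuous Nrm :=
  h.convexOn.locallyLipschitz.continuous

/-- `Nrm` is continuous (being convex) and positive on the compact Euclidean unit sphere. -/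
lemma exists_norm_le_mul (h : IsNorm Nrm) : ∃ c, 0 < c ∧ ∀ v, ‖v‖ ≤ c * Nrm v := by
  obtain ⟨m, hm, hmin⟩ := (isCompact_sphere (0 : Euc d) 1).exists_forall_le'
    h.continuous.continuousOn (a := 0) fun v hv =>
      (h.nonneg v).lt_of_ne' fun h0 => ne_zero_of_mem_unit_sphere ⟨v, hv⟩ ((h.1 v).1 h0)
  refine ⟨m⁻¹, inv_pos.2 hm, fun v => ?_⟩
  rcases eq_or_ne v 0 with rfl | hv
  · simp [h.map_zero]
  have hvpos : 0 < ‖v‖ := norm_pos_iff.2 hv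
  have := hmin (‖v‖⁻¹ • v) (by simp [norm_smul, hvpos.ne'])
  rw [h.2.1, abs_of_pos (inv_pos.2 hvpos)] at this
  rw [le_inv_mul_iff₀ hm]
  rwa [le_inv_mul_iff₀ hvpos, mul_comm] at this

lemma bddAbove_inner_unitBall (h : IsNorm Nrm) (y : Euc d) :
    BddAbove {s | ∃ v, Nrm v ≤ 1 ∧ s = ⟪y, v⟫} := by
  obtain ⟨c, hc, hle⟩ := h.exists_norm_le_mul
  refine ⟨‖y‖ * c, ?_⟩
  rintro s ⟨v, hv, rfl⟩
  calc ⟪y, v⟫ ≤ ‖y‖ * ‖v‖ := real_inner_le_norm y v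
    _ ≤ ‖y‖ * (c * 1) := by gcongr; exact (hle v).trans (by gcongr)
    _ = ‖y‖ * c := by rw [mul_one]

lemma inner_le_dualNorm_mul (h : IsNorm Nrm) (y v : Euc d) :
    ⟪y, v⟫ ≤ dualNorm Nrm y * Nrm v := by
  rcases (h.nonneg v).eq_or_lt with h0 | hpos
  · simp [(h.1 v).1 h0.symm, h.map_zero]
  have hmem : ⟪y, (Nrm v)⁻¹ • v⟫ ∈ {s | ∃ u, Nrm u ≤ 1 ∧ s = ⟪y, u⟫} :=
    ⟨_, by rw [h.2.1, abs_of_pos (inv_pos.2 hpos), inv_mul_cancel₀ hpos.ne'], rfl⟩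
  have := le_csSup (h.bddAbove_inner_unitBall y) hmem
  rw [real_inner_smul_right, inv_mul_le_iff₀ hpos, mul_comm] at this
  exact this

lemma abs_inner_le_dualNorm_mul (h : IsNorm Nrm) (y v : Euc d) :
    |⟪y, v⟫| ≤ dualNorm Nrm y * Nrm v := by
  have hneg := h.inner_le_dualNorm_mul y (-v)
  rw [inner_neg_right, h.map_neg] at hneg
  exact abs_le.2 ⟨by linarith, h.inner_le_dualNorm_mul y v⟩

end IsNorm

lemma le_quadratic_of_deriv2_le {f f' f'' : ℝ → ℝ} {a K : ℝ} (ha : 0 ≤ a)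
    (hf : ∀ s, HasDerivAt f (f' s) s) (hf' : ∀ s, HasDerivAt f' (f'' s) s)
    (hK : ∀ s ∈ Set.Icc 0 a, f'' s ≤ K) :
    f a ≤ f 0 + a * f' 0 + K * a ^ 2 / 2 := by
  have hslope : ∀ s ∈ Set.Icc 0 a, f' s ≤ f' 0 + K * s :=
    image_le_of_deriv_right_le_deriv_boundary (B' := fun _ => K)
      (fun s _ => (hf' s).continuousAt.continuousWithinAt) (fun s _ => (hf' s).hasDerivWithinAt)
      (by simp) (by fun_prop)
      (fun s _ => by simpa using ((hasDerivAt_id s).const_mul K).const_add (f' 0) |>.hasDerivWithinAt)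
      (fun s hs => hK s (Set.Ico_subset_Icc_self hs))
  refine image_le_of_deriv_right_le_deriv_boundary (B := fun s => f 0 + s * f' 0 + K * s ^ 2 / 2)
    (B' := fun s => f' 0 + K * s)
    (fun s _ => (hf s).continuousAt.continuousWithinAt) (fun s _ => (hf s).hasDerivWithinAt)
    (by simp) (by fun_prop) (fun s _ => ?_) (fun s hs => hslope s (Set.Ico_subset_Icc_self hs))
    (Set.right_mem_Icc.2 ha)
  have := (((hasDerivAt_id s).mul_const (f' 0)).const_add (f 0)).add
    (((hasDerivAt_pow 2 s).const_mul K).div_const 2)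
  exact (this.congr_deriv (by push_cast; ring)).hasDerivWithinAt

section ExpLoss

variable {d N : ℕ} (x : Fin N → Euc d)

lemma expLoss_nonneg (u : Euc d) : 0 ≤ expLoss x u :=
  Finset.sum_nonneg fun _ _ => (Real.exp_pos _).le

lemma hasDerivAt_exp_neg_inner_line (w v y : Euc d) (s : ℝ) :
    HasDerivAt (fun s : ℝ => Real.exp (-⟪w + s • v, y⟫))
      (-(Real.exp (-⟪w + s • v, y⟫) * ⟪v, y⟫)) s := by
  have hline : HasDerivAt (fun s : ℝ => -⟪w + s • v, y⟫) (-⟪v, y⟫) s := by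
    simp only [inner_add_left, real_inner_smul_left, neg_add]
    simpa using ((hasDerivAt_id s).mul_const ⟪v, y⟫).neg.const_add (-⟪w, y⟫)
  simpa [mul_neg] using hline.exp

lemma hasDerivAt_expLoss_line (w v : Euc d) (s : ℝ) :
    HasDerivAt (fun s : ℝ => expLoss x (w + s • v)) (-⟪v, negGrad x (w + s • v)⟫) s := by
  simp only [expLoss, negGrad, inner_sum, real_inner_smul_right, ← Finset.sum_neg_distrib]
  exact HasDerivAt.fun_sum fun n _ => by
    simpa [real_inner_comm, mul_comm] using hasDerivAt_exp_neg_inner_line w v (x n) s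

lemma hasDerivAt_neg_inner_negGrad_line (w v : Euc d) (s : ℝ) :
    HasDerivAt (fun s : ℝ => -⟪v, negGrad x (w + s • v)⟫)
      (∑ n, Real.exp (-⟪w + s • v, x n⟫) * ⟪v, x n⟫ ^ 2) s := by
  simp only [negGrad, inner_sum, real_inner_smul_right, ← Finset.sum_neg_distrib]
  exact HasDerivAt.fun_sum fun n _ => by
    simpa [real_inner_comm, mul_comm, sq, mul_assoc] using
      ((hasDerivAt_exp_neg_inner_line w v (x n) s).mul_const ⟪v, x n⟫).fun_neg

lemma convexOn_expLoss_line (w v : Euc d) :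
    ConvexOn ℝ Set.univ (fun s : ℝ => expLoss x (w + s • v)) :=
  convexOn_of_hasDerivWithinAt2_nonneg convex_univ
    (fun s _ => (hasDerivAt_expLoss_line x w v s).continuousAt.continuousWithinAt)
    (fun s _ => (hasDerivAt_expLoss_line x w v s).hasDerivWithinAt)
    (fun s _ => (hasDerivAt_neg_inner_negGrad_line x w v s).hasDerivWithinAt)
    (fun _ _ => Finset.sum_nonneg fun _ _ => by positivity)

lemma sum_exp_mul_inner_sq_le {v : Euc d} {M : ℝ} (hM : ∀ n, |⟪v, x n⟫| ≤ M) (u : Euc d) :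
    ∑ n, Real.exp (-⟪u, x n⟫) * ⟪v, x n⟫ ^ 2 ≤ M ^ 2 * expLoss x u := by
  rw [expLoss, Finset.mul_sum]
  refine Finset.sum_le_sum fun n _ => ?_
  rw [mul_comm (M ^ 2)]
  exact mul_le_mul_of_nonneg_left (sq_le_sq' (abs_le.1 (hM n)).1 (abs_le.1 (hM n)).2)
    (Real.exp_pos _).le

lemma expLoss_add_smul_le {w v : Euc d} {M η : ℝ} (hM : ∀ n, |⟪v, x n⟫| ≤ M) (hη : 0 ≤ η)
    (hdec : expLoss x (w + η • v) ≤ expLoss x w) :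
    expLoss x (w + η • v) ≤
      expLoss x w - η * ⟪v, negGrad x w⟫ + M ^ 2 * expLoss x w * η ^ 2 / 2 := by
  have hbelow : ∀ s ∈ Set.Icc 0 η, expLoss x (w + s • v) ≤ expLoss x w := fun s hs => by
    have := (convexOn_expLoss_line x w v).le_on_segment (Set.mem_univ 0) (Set.mem_univ η)
      (by rwa [segment_eq_Icc hη])
    simpa [hdec] using this
  have := le_quadratic_of_deriv2_le hη (hasDerivAt_expLoss_line x w v)
    (hasDerivAt_neg_inner_negGrad_line x w v) fun s hs =>
      (sum_exp_mul_inner_sq_le x hM _).trans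
        (mul_le_mul_of_nonneg_left (hbelow s hs) (sq_nonneg M))
  simp only [zero_smul, add_zero] at this
  linarith

lemma mul_sq_le_two_mul_sub_expLoss {Nrm : Euc d → ℝ} (hNrm : IsNorm Nrm) {B : ℝ}
    (hB : ∀ n, dualNorm Nrm (x n) ≤ B) {w Δ : Euc d} {η : ℝ}
    (hdir : ⟪Δ, negGrad x w⟫ = Nrm Δ ^ 2) (hη : 0 < η) (hηle : η ≤ 1 / (B ^ 2 * expLoss x w))
    (hdec : expLoss x (w + η • Δ) ≤ expLoss x w) :
    η * Nrm Δ ^ 2 ≤ 2 * (expLoss x w - expLoss x (w + η • Δ)) := by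
  -- `1 / 0 = 0`, so `0 < η ≤ 1 / (B² L(w))` forces `0 < B² L(w)`.
  have hstep : η * (B ^ 2 * expLoss x w) ≤ 1 :=
    (le_div_iff₀ (one_div_pos.1 (hη.trans_le hηle))).1 hηle
  have hM : ∀ n, |⟪Δ, x n⟫| ≤ B * Nrm Δ := fun n => by
    rw [real_inner_comm]
    exact (hNrm.abs_inner_le_dualNorm_mul _ _).trans
      (mul_le_mul_of_nonneg_right (hB n) (hNrm.nonneg Δ))
  have := expLoss_add_smul_le x hM hη.le hdec
  rw [hdir] at this
  nlinarith [mul_le_mul_of_nonneg_left hstep (by positivity : 0 ≤ η * Nrm Δ ^ 2)]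

end ExpLoss

lemma summable_and_tsum_le_of_le_sub_succ {a u : ℕ → ℝ} (ha : ∀ t, 0 ≤ a t)
    (hu : ∀ t, 0 ≤ u t) (h : ∀ t, a t ≤ u t - u (t + 1)) : Summable a ∧ ∑' t, a t ≤ u 0 := by
  have hpartial : ∀ T, ∑ t ∈ Finset.range T, a t ≤ u 0 := fun T =>
    calc ∑ t ∈ Finset.range T, a t ≤ ∑ t ∈ Finset.range T, (u t - u (t + 1)) :=
          Finset.sum_le_sum fun t _ => h t
      _ = u 0 - u T := Finset.sum_range_sub' u T
      _ ≤ u 0 := sub_le_self _ (hu T)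
  exact ⟨summable_of_sum_range_le ha hpartial, Real.tsum_le_of_sum_range_le ha hpartial⟩

/-- for steepest descent on the exponential loss with step sizes
`0 < η_t ≤ 1/(B² L(w_t))` and strictly decreasing loss,
`∑_t η_t ‖∇L(w_t)‖_*² < ∞`, bounded by `2 L(w₀)`. -/
theorem steepest_descent_summable {d N : ℕ} (Nrm : Euc d → ℝ) (hNrm : IsNorm Nrm)
    (x : Fin N → Euc d) (B : ℝ) (hB : ∀ n, dualNorm Nrm (x n) ≤ B)
    (w Δ : ℕ → Euc d) (η : ℕ → ℝ)
    (hupd : ∀ t, w (t + 1) = w t + η t • Δ t)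
    (hdir1 : ∀ t, ⟪Δ t, negGrad x (w t)⟫ = (Nrm (Δ t)) ^ 2)
    (hdir2 : ∀ t, (Nrm (Δ t)) ^ 2 = (dualNorm Nrm (-(negGrad x (w t)))) ^ 2)
    (hη : ∀ t, 0 < η t ∧ η t ≤ 1 / (B ^ 2 * expLoss x (w t)))
    (hdec : StrictAnti fun t => expLoss x (w t)) :
    Summable (fun t => η t * (dualNorm Nrm (-(negGrad x (w t)))) ^ 2) ∧
      ∑' t, η t * (dualNorm Nrm (-(negGrad x (w t)))) ^ 2 ≤ 2 * expLoss x (w 0) := by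
  refine summable_and_tsum_le_of_le_sub_succ (fun t => mul_nonneg (hη t).1.le (sq_nonneg _))
    (fun t => mul_nonneg zero_le_two (expLoss_nonneg x (w t))) fun t => ?_
  have hdec_t : expLoss x (w t + η t • Δ t) ≤ expLoss x (w t) :=
    hupd t ▸ (hdec (Nat.lt_succ_self t)).le
  rw [← hdir2 t, hupd t, ← mul_sub]
  exact mul_sq_le_two_mul_sub_expLoss x hNrm hB (hdir1 t) (hη t).1 (hη t).2 hdec_t

end
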